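/- arXiv:2206.09462 — 3 statements merged into one kernel-verified Lean document; each statement's English description precedes it below -/
import Mathlib

section
/- Let H be a real Hilbert space, a ≥ 1, and (q_k)_{k≥0} a bounded sequence in H such that q_{k+1} + (k/a)(q_{k+1} - q_k) → l as k → +∞ for some l ∈ H. Then q_k → l as k → +∞. -/
/-!
Write `e k = q (k+1) + (k/a) • (q (k+1) - q k)`. Then `(a + k) • (q (k+1) - l)` equals
`k • (q k - l) + a • (e k - l)`, so the distances `d k = ‖q k - l‖` satisfy
`(a + k) d (k+1) ≤ k d k + a ‖e k - l‖`. Since `a ≥ 1`, once `‖e k - l‖ ≤ δ` for `k ≥ m` this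
propagates the bound `n d n ≤ m d m + n δ`, i.e. `d n ≤ m d m / n + δ`, and `d n → 0`.
-/

open Filter Topology

lemma add_mul_norm_sub_le {E : Type*} [NormedAddCommGroup E] [NormedSpace ℝ E]
    {a k : ℝ} (ha : 0 < a) (hk : 0 ≤ k) (x y l : E) :
    (a + k) * ‖y - l‖ ≤ k * ‖x - l‖ + a * ‖y + (k / a) • (y - x) - l‖ := by
  have hsplit : (a + k) • (y - l) = k • (x - l) + a • (y + (k / a) • (y - x) - l) := by
    have : a ≠ 0 := ha.ne'
    match_scalars <;> field_simp <;> ring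
  calc (a + k) * ‖y - l‖ = ‖(a + k) • (y - l)‖ := by
        rw [norm_smul, Real.norm_of_nonneg (by positivity)]
    _ ≤ ‖k • (x - l)‖ + ‖a • (y + (k / a) • (y - x) - l)‖ := hsplit ▸ norm_add_le _ _
    _ = k * ‖x - l‖ + a * ‖y + (k / a) • (y - x) - l‖ := by
        rw [norm_smul, norm_smul, Real.norm_of_nonneg hk, Real.norm_of_nonneg ha.le]

section RealSequences

variable {a : ℝ} {d ε : ℕ → ℝ}

lemma natCast_mul_le_of_add_mul_succ_le (ha : 1 ≤ a)
    (hstep : ∀ n, (a + n) * d (n + 1) ≤ n * d n + a * ε n)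
    {m : ℕ} (hdm : 0 ≤ d m) {δ : ℝ} (hδ : 0 ≤ δ) (hε : ∀ n ≥ m, ε n ≤ δ) :
    ∀ n ≥ m, (n : ℝ) * d n ≤ m * d m + n * δ := by
  intro n hn
  induction n, hn using Nat.le_induction with
  | base => nlinarith [Nat.cast_nonneg (α := ℝ) m]
  | succ n hn ih =>
    have hrec : (a + n) * (d (n + 1) - δ) ≤ m * d m := by
      nlinarith [hstep n, hε n hn]
    push_cast
    -- `(n + 1) (d (n+1) - δ)` is at most `(a + n) (d (n+1) - δ)` when nonnegative, and `0` otherwise.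
    rcases le_total δ (d (n + 1)) with hge | hlt
    · nlinarith
    · nlinarith [Nat.cast_nonneg (α := ℝ) n, Nat.cast_nonneg (α := ℝ) m]

lemma tendsto_zero_of_add_mul_succ_le (ha : 1 ≤ a) (hd : ∀ n, 0 ≤ d n)
    (hε : Tendsto ε atTop (𝓝 0)) (hstep : ∀ n, (a + n) * d (n + 1) ≤ n * d n + a * ε n) :
    Tendsto d atTop (𝓝 0) := by
  refine tendsto_order.2 ⟨fun b hb => Eventually.of_forall fun n => hb.trans_le (hd n),
    fun b hb => ?_⟩
  have hδ : 0 < b / 2 := half_pos hb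
  obtain ⟨m, hm⟩ := eventually_atTop.1 (hε.eventually (eventually_le_nhds hδ))
  have hbound := natCast_mul_le_of_add_mul_succ_le ha hstep (hd m) hδ.le hm
  have hdecay : ∀ᶠ n : ℕ in atTop, (m * d m) / n < b / 2 :=
    (tendsto_const_div_atTop_nhds_zero_nat _).eventually (eventually_lt_nhds hδ)
  filter_upwards [hdecay, eventually_ge_atTop (max m 1)] with n hn hnm
  have hpos : (0 : ℝ) < n := by exact_mod_cast (le_max_right m 1).trans hnm
  have hdn : d n ≤ (m * d m) / n + b / 2 := by
    rw [div_add' _ _ _ hpos.ne', le_div_iff₀ hpos]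
    linarith [hbound n ((le_max_left m 1).trans hnm)]
  linarith

end RealSequences

theorem stmt_7_general {H : Type*} [NormedAddCommGroup H] [InnerProductSpace ℝ H]
    (a : ℝ) (ha : 1 ≤ a) (q : ℕ → H) (l : H)
    (hlim : Filter.Tendsto (fun k : ℕ => q (k + 1) + ((k : ℝ) / a) • (q (k + 1) - q k))
      Filter.atTop (nhds l)) :
    Filter.Tendsto q Filter.atTop (nhds l) := by
  rw [tendsto_iff_norm_sub_tendsto_zero] at hlim ⊢
  refine tendsto_zero_of_add_mul_succ_le ha (fun n => norm_nonneg _) hlim fun n => ?_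
  exact add_mul_norm_sub_le (by linarith) n.cast_nonneg (q n) (q (n + 1)) l

theorem stmt_7 {H : Type*} [NormedAddCommGroup H] [InnerProductSpace ℝ H]
    (a : ℝ) (ha : 1 ≤ a) (q : ℕ → H) (l : H)
    (hbdd : ∃ C : ℝ, ∀ k, ‖q k‖ ≤ C)
    (hlim : Filter.Tendsto (fun k : ℕ => q (k + 1) + ((k : ℝ) / a) • (q (k + 1) - q k))
      Filter.atTop (nhds l)) :
    Filter.Tendsto q Filter.atTop (nhds l) :=
  stmt_7_general a ha q l hlim
end

section
/- Let α > 2 and define ω₂(λ) := (1/(α-1))(4(α-1)(λ+1-α) + α(2-α)), ω₁(λ) := 4(λ+1-α), ω₄ := (1/(2(α-1)))(2-α)(3α-2). Define ξ₁(α) := -((α-2)/(8(α-1)))(3α-2 + √((α-2)(5α-2))) and ξ₂(α) := -((α-2)/(8(α-1)))(3α-2 - √((α-2)(5α-2))). Then for every λ with α - 1 + ξ₁(α) < λ < α - 1 + ξ₂(α) one has ω₂(λ)² - (2(5α-2)/(3α-2))·ω₁(λ)·ω₄ < 0. -/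
/-!
Multiplied by `4(α-1)²`, the expression becomes a quadratic in `λ` which, since
`√((α-2)(5α-2))² = (α-2)(5α-2)`, factors as
`(8(α-1)(λ-(α-1)) + (α-2)(3α-2+√…)) · (8(α-1)(λ-(α-1)) + (α-2)(3α-2-√…))`.
Its roots are `α-1+ξ₁(α) < α-1+ξ₂(α)`, so strictly between them the first factor is positive
and the second negative.
-/

noncomputable def omega₁ (α lam : ℝ) : ℝ := 4 * (lam + 1 - α)

noncomputable def omega₂ (α lam : ℝ) : ℝ := (1 / (α - 1)) * (4 * (α - 1) * (lam + 1 - α) + α * (2 - α))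

noncomputable def omega₄ (α : ℝ) : ℝ := (1 / (2 * (α - 1))) * (2 - α) * (3 * α - 2)

lemma mul_sub_add_neg_div_mul {a b c w x : ℝ} (hc : c ≠ 0) :
    c * (x - (a + -(b / c) * w)) = c * (x - a) + b * w := by
  field_simp
  ring

lemma add_neg_div_mul_lt_iff {a b c w x : ℝ} (hc : 0 < c) :
    a + -(b / c) * w < x ↔ 0 < c * (x - a) + b * w := by
  rw [← mul_sub_add_neg_div_mul hc.ne', mul_pos_iff_of_pos_left hc, sub_pos]

lemma lt_add_neg_div_mul_iff {a b c w x : ℝ} (hc : 0 < c) :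
    x < a + -(b / c) * w ↔ c * (x - a) + b * w < 0 := by
  rw [← mul_sub_add_neg_div_mul hc.ne', ← sub_neg]
  exact ⟨mul_neg_of_pos_of_neg hc, fun h ↦ neg_of_mul_neg_right h hc.le⟩

lemma omega₂_sq_sub_mul_eq_mul {α lam s : ℝ} (hα₁ : α - 1 ≠ 0) (hα₂ : 3 * α - 2 ≠ 0)
    (hs : s ^ 2 = (α - 2) * (5 * α - 2)) :
    (omega₂ α lam ^ 2 - (2 * (5 * α - 2) / (3 * α - 2)) * omega₁ α lam * omega₄ α)
        * (4 * (α - 1) ^ 2)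
      = (8 * (α - 1) * (lam - (α - 1)) + (α - 2) * (3 * α - 2 + s))
        * (8 * (α - 1) * (lam - (α - 1)) + (α - 2) * (3 * α - 2 - s)) := by
  -- the form in which `field_simp` looks for the denominator
  have : α * 3 - 2 ≠ 0 := by rwa [mul_comm] at hα₂
  unfold omega₁ omega₂ omega₄
  field_simp
  linear_combination (α - 2) ^ 2 * hs

theorem stmt_11 (α lam : ℝ) (hα : 2 < α)
    (hl : α - 1 + (-((α - 2) / (8 * (α - 1))) * (3 * α - 2 + Real.sqrt ((α - 2) * (5 * α - 2)))) < lam)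
    (hu : lam < α - 1 + (-((α - 2) / (8 * (α - 1))) * (3 * α - 2 - Real.sqrt ((α - 2) * (5 * α - 2))))) :
    ((1 / (α - 1)) * (4 * (α - 1) * (lam + 1 - α) + α * (2 - α))) ^ 2
      - (2 * (5 * α - 2) / (3 * α - 2)) * (4 * (lam + 1 - α))
        * ((1 / (2 * (α - 1))) * (2 - α) * (3 * α - 2)) < 0 := by
  have hc : 0 < 8 * (α - 1) := by linarith
  rw [add_neg_div_mul_lt_iff hc] at hl
  rw [lt_add_neg_div_mul_iff hc] at hu
  have hs := Real.sq_sqrt (by nlinarith : 0 ≤ (α - 2) * (5 * α - 2))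
  have hfactor := omega₂_sq_sub_mul_eq_mul (lam := lam) (by linarith) (by linarith) hs
  change omega₂ α lam ^ 2 - (2 * (5 * α - 2) / (3 * α - 2)) * omega₁ α lam * omega₄ α < 0
  exact neg_of_mul_neg_left (hfactor ▸ mul_neg_of_pos_of_neg hl hu) (by positivity)
end

section
/- Let H be a real Hilbert space, T : H → H θ-averaged with θ ∈ (0,1], α > 2, 0 < s ≤ 1/θ, x* a fixed point of T, and (x_k)_{k≥0} generated by the Fast KM algorithm. For 0 ≤ λ ≤ (3α)/4 - 1/2, the energy E_{λ,k} := (1/2)‖2λ(x_k - x*) + 2k(x_k - x_{k-1}) + ((3α-2)sk/(2(α-1)))(Id-T)(x_{k-1})‖² + 2λ(α-1-λ)‖x_k - x*‖² + ((α-2)λsk/(α-1))⟨x_k - x*, (Id-T)(x_{k-1})⟩ + ((α-2)(3α-2)s²k²/(8(α-1)²))‖(Id-T)(x_{k-1})‖² is nonnegative for every k ≥ 1. -/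
/-!
The first summand of the energy is a squared norm, so it suffices that the remaining three terms,
a quadratic form `A ‖a‖² + K ⟪a, g⟫ + C ‖g‖²` in `a = x_k - x*` and `g = (Id - T)(x_{k-1})`, are
nonnegative. By Cauchy–Schwarz this holds as soon as `A, C ≥ 0` and `K² ≤ 4AC`, and for the
coefficients of the energy the discriminant condition reduces exactly to `λ ≤ (3α - 2)/4`.
-/

open RealInnerProductSpace

theorem quadratic_nonneg_of_sq_le {A K C : ℝ} (hA : 0 ≤ A) (hC : 0 ≤ C) (hK : K ^ 2 ≤ 4 * A * C)
    (X Y : ℝ) : 0 ≤ A * X ^ 2 - |K| * X * Y + C * Y ^ 2 := by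
  rcases hA.eq_or_lt with rfl | hA
  · have : K = 0 := by nlinarith [sq_nonneg K]
    subst this
    simpa using mul_nonneg hC (sq_nonneg Y)
  · nlinarith [sq_nonneg (2 * A * X - |K| * Y), mul_nonneg (sub_nonneg.2 hK) (sq_nonneg Y),
      sq_abs K]

theorem inner_quadratic_nonneg {E : Type*} [NormedAddCommGroup E] [InnerProductSpace ℝ E]
    {A K C : ℝ} (hA : 0 ≤ A) (hC : 0 ≤ C) (hK : K ^ 2 ≤ 4 * A * C) (u v : E) :
    0 ≤ A * ‖u‖ ^ 2 + K * ⟪u, v⟫ + C * ‖v‖ ^ 2 := by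
  have hcs : -|K| * (‖u‖ * ‖v‖) ≤ K * ⟪u, v⟫ := by
    calc -|K| * (‖u‖ * ‖v‖) ≤ -|K| * |⟪u, v⟫| :=
          mul_le_mul_of_nonpos_left (abs_real_inner_le_norm u v) (neg_nonpos.2 (abs_nonneg K))
      _ = -|K * ⟪u, v⟫| := by rw [abs_mul, neg_mul]
      _ ≤ K * ⟪u, v⟫ := neg_abs_le _
  linarith [quadratic_nonneg_of_sq_le hA hC hK ‖u‖ ‖v‖]

theorem energy_coeff_norm_nonneg {α lam : ℝ} (hα : 2 < α) (hlam0 : 0 ≤ lam)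
    (hlam1 : lam ≤ 3 * α / 4 - 1 / 2) : 0 ≤ 2 * lam * (α - 1 - lam) := by
  have : lam ≤ α - 1 := by linarith
  have : 0 ≤ α - 1 - lam := by linarith
  positivity

theorem energy_coeff_discrim {α lam : ℝ} (hα : 2 < α) (hlam0 : 0 ≤ lam)
    (hlam1 : lam ≤ 3 * α / 4 - 1 / 2) (s t : ℝ) :
    ((α - 2) * lam * s * t / (α - 1)) ^ 2 ≤ 4 * (2 * lam * (α - 1 - lam))
      * ((α - 2) * (3 * α - 2) * s ^ 2 * t ^ 2 / (8 * (α - 1) ^ 2)) := by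
  have hα1 : α - 1 ≠ 0 := by linarith
  have hlam : (α - 2) * lam ≤ (α - 1 - lam) * (3 * α - 2) := by nlinarith
  have key : (α - 2) * lam ^ 2 * (α - 2) ≤ lam * (α - 1 - lam) * (α - 2) * (3 * α - 2) := by
    nlinarith [mul_le_mul_of_nonneg_left hlam (mul_nonneg hlam0 (by linarith : (0 : ℝ) ≤ α - 2))]
  have hst : 0 ≤ (s * t / (α - 1)) ^ 2 := sq_nonneg _
  calc ((α - 2) * lam * s * t / (α - 1)) ^ 2
        = (α - 2) * lam ^ 2 * (α - 2) * (s * t / (α - 1)) ^ 2 := by ring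
    _ ≤ lam * (α - 1 - lam) * (α - 2) * (3 * α - 2) * (s * t / (α - 1)) ^ 2 :=
        mul_le_mul_of_nonneg_right key hst
    _ = _ := by field_simp; ring

theorem energy_coeff_residual_nonneg {α : ℝ} (hα : 2 < α) (s t : ℝ) :
    0 ≤ (α - 2) * (3 * α - 2) * s ^ 2 * t ^ 2 / (8 * (α - 1) ^ 2) := by
  have : 0 ≤ α - 2 := by linarith
  have : 0 ≤ 3 * α - 2 := by linarith
  positivity

theorem stmt_15_general {H : Type*} [NormedAddCommGroup H] [InnerProductSpace ℝ H]
    (T : H → H)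
    (α s lam : ℝ) (hα : 2 < α)
    (hlam0 : 0 ≤ lam) (hlam1 : lam ≤ 3 * α / 4 - 1 / 2)
    (xstar : H)
    (x : ℕ → H) :
    ∀ k ≥ 1, 0 ≤
      (1 / 2) * ‖(2 * lam) • (x k - xstar) + (2 * (k : ℝ)) • (x k - x (k - 1))
          + ((3 * α - 2) * s * (k : ℝ) / (2 * (α - 1))) • (x (k - 1) - T (x (k - 1)))‖ ^ 2
      + 2 * lam * (α - 1 - lam) * ‖x k - xstar‖ ^ 2
      + ((α - 2) * lam * s * (k : ℝ) / (α - 1)) * ⟪x k - xstar, x (k - 1) - T (x (k - 1))⟫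
      + ((α - 2) * (3 * α - 2) * s ^ 2 * (k : ℝ) ^ 2 / (8 * (α - 1) ^ 2))
          * ‖x (k - 1) - T (x (k - 1))‖ ^ 2 := by
  intro k _
  have hform := inner_quadratic_nonneg (energy_coeff_norm_nonneg hα hlam0 hlam1)
    (energy_coeff_residual_nonneg hα s k) (energy_coeff_discrim hα hlam0 hlam1 s k)
    (x k - xstar) (x (k - 1) - T (x (k - 1)))
  have hsq := sq_nonneg ‖(2 * lam) • (x k - xstar) + (2 * (k : ℝ)) • (x k - x (k - 1))
    + ((3 * α - 2) * s * (k : ℝ) / (2 * (α - 1))) • (x (k - 1) - T (x (k - 1)))‖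
  linarith

theorem stmt_15 {H : Type*} [NormedAddCommGroup H] [InnerProductSpace ℝ H]
    (T R : H → H) (θ : ℝ) (hθ : θ ∈ Set.Ioc (0 : ℝ) 1)
    (hR : ∀ x y, ‖R x - R y‖ ≤ ‖x - y‖)
    (hT : ∀ x, T x = (1 - θ) • x + θ • R x)
    (α s lam : ℝ) (hα : 2 < α) (hs0 : 0 < s) (hs1 : s ≤ 1 / θ)
    (hlam0 : 0 ≤ lam) (hlam1 : lam ≤ 3 * α / 4 - 1 / 2)
    (xstar : H) (hfix : T xstar = xstar)
    (x : ℕ → H)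
    (hrec : ∀ k ≥ 1, x (k + 1) =
      (1 - s * α / (2 * ((k : ℝ) + α))) • x k
      + ((1 - s) * (k : ℝ) / ((k : ℝ) + α)) • (x k - x (k - 1))
      + (s * α / (2 * ((k : ℝ) + α))) • T (x k)
      + (s * (k : ℝ) / ((k : ℝ) + α)) • (T (x k) - T (x (k - 1)))) :
    ∀ k ≥ 1, 0 ≤
      (1 / 2) * ‖(2 * lam) • (x k - xstar) + (2 * (k : ℝ)) • (x k - x (k - 1))
          + ((3 * α - 2) * s * (k : ℝ) / (2 * (α - 1))) • (x (k - 1) - T (x (k - 1)))‖ ^ 2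
      + 2 * lam * (α - 1 - lam) * ‖x k - xstar‖ ^ 2
      + ((α - 2) * lam * s * (k : ℝ) / (α - 1)) * ⟪x k - xstar, x (k - 1) - T (x (k - 1))⟫
      + ((α - 2) * (3 * α - 2) * s ^ 2 * (k : ℝ) ^ 2 / (8 * (α - 1) ^ 2))
          * ‖x (k - 1) - T (x (k - 1))‖ ^ 2 :=
  stmt_15_general T α s lam hα hlam0 hlam1 xstar x
end
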